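/- Let Ω := {x : E | f x > 0}, assume f is continuously differentiable on Ω with ∇f x ≠ 0 for all x ∈ Ω, and let x₀ ∈ Ω. Let ψ : ℝ → ℝ be nonnegative and Lebesgue integrable on (0, f x₀), and suppose there is a measurable set D ⊆ (0, f x₀) with (0, f x₀) \ D of Lebesgue measure zero such that ψ (f x) * ‖∇f x‖ ≥ 1 for every x ∈ Ω with f x ∈ D. Let T ∈ (0, ∞], let α : ℝ → E satisfy α 0 = x₀, α t ∈ Ω for all t ∈ [0, T), and HasDerivAt α (−∇f (α t)) t for every t ∈ [0, T). Then for every s ∈ (0, T), the length of α on [0, s] satisfies ∫ r in (0, s), ‖∇f (α r)‖ ≤ ∫ r in (0, f x₀), ψ r. -/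

import Mathlib

open Set MeasureTheory
open scoped ENNReal

/-! Along the flow, `φ := f ∘ α` has derivative `-‖∇f (α r)‖²`, so it is strictly decreasing and
maps `(0, s)` injectively into `(0, f x₀)`. Changing variables `y = φ r` turns the arc length
`∫ ‖∇f (α r)‖ dr` into `∫ dy / ‖∇f (α (φ⁻¹ y))‖` over `φ '' (0, s)`, and the Kurdyka–Łojasiewicz
inequality bounds this integrand by `ψ y` for almost every `y`. -/

theorem setIntegral_le_of_le_abs_deriv_mul_comp {s U D : Set ℝ} {φ φ' v ψ : ℝ → ℝ}
    (hs : MeasurableSet s) (hφ' : ∀ x ∈ s, HasDerivWithinAt φ (φ' x) s x)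
    (hφ'0 : ∀ x ∈ s, φ' x ≠ 0) (hinj : InjOn φ s) (hφU : MapsTo φ s U)
    (hv : IntegrableOn v s) (hψ : IntegrableOn ψ U) (hψ0 : 0 ≤ᵐ[volume.restrict U] ψ)
    (hD : volume (U \ D) = 0) (hle : ∀ x ∈ s, φ x ∈ D → v x ≤ |φ' x| * ψ (φ x)) :
    ∫ x in s, v x ≤ ∫ y in U, ψ y := by
  set w : ℝ → ℝ := fun y => v (Function.invFunOn φ s y) / |φ' (Function.invFunOn φ s y)|
  have hw : EqOn (fun x => |φ' x| • w (φ x)) v s := fun x hx => by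
    simp only [w, hinj.leftInvOn_invFunOn hx, smul_eq_mul]
    exact mul_div_cancel₀ _ (abs_ne_zero.2 (hφ'0 x hx))
  have hwint : IntegrableOn w (φ '' s) :=
    (integrableOn_image_iff_integrableOn_abs_deriv_smul hs hφ' hinj w).2
      (hv.congr_fun hw.symm hs)
  have himage : MeasurableSet (φ '' s) :=
    hs.image_of_continuousOn_injOn (fun x hx => (hφ' x hx).continuousWithinAt) hinj
  have hwψ : w ≤ᵐ[volume.restrict (φ '' s)] ψ := by
    have hDae : ∀ᵐ y, y ∈ U → y ∈ D := by
      refine (measure_eq_zero_iff_ae_notMem.1 hD).mono fun y hy hyU => ?_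
      by_contra hyD
      exact hy ⟨hyU, hyD⟩
    refine (ae_restrict_iff' himage).2 (hDae.mono ?_)
    rintro _ hy ⟨x, hx, rfl⟩
    have hpos : 0 < |φ' x| := abs_pos.2 (hφ'0 x hx)
    simp only [w, hinj.leftInvOn_invFunOn hx]
    exact (div_le_iff₀' hpos).2 (hle x hx (hy (hφU hx)))
  calc ∫ x in s, v x = ∫ y in φ '' s, w y := by
        rw [integral_image_eq_integral_abs_deriv_smul hs hφ' hinj]
        exact setIntegral_congr_fun hs hw.symm
    _ ≤ ∫ y in φ '' s, ψ y :=
        setIntegral_mono_ae_restrict hwint (hψ.mono_set hφU.image_subset) hwψ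
    _ ≤ ∫ y in U, ψ y := setIntegral_mono_set hψ hψ0 hφU.image_subset.eventuallyLE

section GradientFlow

variable {F : Type*} [NormedAddCommGroup F] [InnerProductSpace ℝ F] [CompleteSpace F]
  {f : F → ℝ}

theorem ContDiffOn.continuousOn_gradient {U : Set F} (hf : ContDiffOn ℝ 1 f U) (hU : IsOpen U) :
    ContinuousOn (gradient f) U :=
  (InnerProductSpace.toDual ℝ F).symm.continuous.comp_continuousOn
    (hf.continuousOn_fderiv_of_isOpen hU le_rfl)

theorem hasDerivAt_comp_of_hasDerivAt_neg_gradient {α : ℝ → F} {t : ℝ}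
    (hf : DifferentiableAt ℝ f (α t)) (hα : HasDerivAt α (-gradient f (α t)) t) :
    HasDerivAt (f ∘ α) (-‖gradient f (α t)‖ ^ 2) t := by
  have h := hf.hasGradientAt.hasFDerivAt.comp_hasDerivAt t hα
  rwa [InnerProductSpace.toDual_apply_apply, inner_neg_right,
    real_inner_self_eq_norm_sq] at h

theorem strictAntiOn_comp_of_hasDerivAt_neg_gradient {α : ℝ → F} {a b : ℝ}
    (hf : ∀ t ∈ Icc a b, DifferentiableAt ℝ f (α t))
    (hα : ∀ t ∈ Icc a b, HasDerivAt α (-gradient f (α t)) t)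
    (hne : ∀ t ∈ Ioo a b, gradient f (α t) ≠ 0) :
    StrictAntiOn (f ∘ α) (Icc a b) := by
  have hderiv t (ht : t ∈ Icc a b) :=
    hasDerivAt_comp_of_hasDerivAt_neg_gradient (hf t ht) (hα t ht)
  refine strictAntiOn_of_deriv_neg (convex_Icc a b)
    (fun t ht => (hderiv t ht).continuousAt.continuousWithinAt) fun t ht => ?_
  rw [interior_Icc] at ht
  rw [(hderiv t (Ioo_subset_Icc_self ht)).deriv, neg_lt_zero]
  exact pow_pos (norm_pos_iff.2 (hne t ht)) 2

theorem integral_norm_gradient_le_of_hasDerivAt_neg_gradient {α : ℝ → F} {a b c : ℝ}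
    {D : Set ℝ} {ψ : ℝ → ℝ} (hf : ∀ t ∈ Icc a b, DifferentiableAt ℝ f (α t))
    (hα : ∀ t ∈ Icc a b, HasDerivAt α (-gradient f (α t)) t)
    (hne : ∀ t ∈ Ioo a b, gradient f (α t) ≠ 0)
    (hspeed : IntegrableOn (fun r => ‖gradient f (α r)‖) (Ioo a b))
    (hc : ∀ t ∈ Ioo a b, c < f (α t)) (hψ : IntegrableOn ψ (Ioo c (f (α a))))
    (hψ0 : 0 ≤ᵐ[volume.restrict (Ioo c (f (α a)))] ψ) (hD : volume (Ioo c (f (α a)) \ D) = 0)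
    (hKL : ∀ t ∈ Ioo a b, f (α t) ∈ D → 1 ≤ ψ (f (α t)) * ‖gradient f (α t)‖) :
    ∫ r in Ioo a b, ‖gradient f (α r)‖ ≤ ∫ y in Ioo c (f (α a)), ψ y := by
  have hanti := strictAntiOn_comp_of_hasDerivAt_neg_gradient hf hα hne
  refine setIntegral_le_of_le_abs_deriv_mul_comp measurableSet_Ioo
    (fun t ht => (hasDerivAt_comp_of_hasDerivAt_neg_gradient (hf t (Ioo_subset_Icc_self ht))
      (hα t (Ioo_subset_Icc_self ht))).hasDerivWithinAt)
    (fun t ht => neg_ne_zero.2 (pow_ne_zero 2 (norm_ne_zero_iff.2 (hne t ht))))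
    (hanti.injOn.mono Ioo_subset_Icc_self)
    (fun t ht => ⟨hc t ht, hanti (left_mem_Icc.2 (ht.1.trans ht.2).le)
      (Ioo_subset_Icc_self ht) ht.1⟩)
    hspeed hψ hψ0 hD fun t ht htD => ?_
  have hKLt := hKL t ht htD
  rw [abs_neg, abs_of_nonneg (by positivity), Function.comp_apply]
  nlinarith [norm_nonneg (gradient f (α t))]

end GradientFlow

theorem length_bound_along_gradient_flow_general (n : ℕ)
    (f : EuclideanSpace ℝ (Fin n) → ℝ)
    (hf : Continuous f)
    (hC1 : ContDiffOn ℝ 1 f {x | 0 < f x})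
    (hgrad_ne : ∀ x, 0 < f x → gradient f x ≠ 0)
    (x₀ : EuclideanSpace ℝ (Fin n))
    (ψ : ℝ → ℝ) (hψ0 : ∀ t, 0 ≤ ψ t) (hψint : IntegrableOn ψ (Ioo 0 (f x₀)))
    (D : Set ℝ)
    (hDfull : volume (Ioo 0 (f x₀) \ D) = 0)
    (hKL : ∀ x, 0 < f x → f x ∈ D → 1 ≤ ψ (f x) * ‖gradient f x‖)
    (T : ℝ≥0∞)
    (α : ℝ → EuclideanSpace ℝ (Fin n)) (hα0 : α 0 = x₀)
    (hαΩ : ∀ t : ℝ, 0 ≤ t → ENNReal.ofReal t < T → 0 < f (α t))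
    (hαflow : ∀ t : ℝ, 0 ≤ t → ENNReal.ofReal t < T →
      HasDerivAt α (-(gradient f (α t))) t) :
    ∀ s : ℝ, 0 < s → ENNReal.ofReal s < T →
      ∫ r in Ioo (0:ℝ) s, ‖gradient f (α r)‖ ≤ ∫ r in Ioo (0:ℝ) (f x₀), ψ r := by
  intro s _ hsT
  have hltT t (ht : t ∈ Icc 0 s) : ENNReal.ofReal t < T :=
    (ENNReal.ofReal_le_ofReal ht.2).trans_lt hsT
  have hpos t (ht : t ∈ Icc 0 s) : 0 < f (α t) := hαΩ t ht.1 (hltT t ht)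
  have hflow t (ht : t ∈ Icc 0 s) := hαflow t ht.1 (hltT t ht)
  have hΩ : IsOpen {x | 0 < f x} := isOpen_lt continuous_const hf
  have hdiff t (ht : t ∈ Icc 0 s) : DifferentiableAt ℝ f (α t) :=
    (hC1.differentiableOn one_ne_zero _ (hpos t ht)).differentiableAt (hΩ.mem_nhds (hpos t ht))
  have hspeed : ContinuousOn (fun r => ‖gradient f (α r)‖) (Icc 0 s) :=
    ((hC1.continuousOn_gradient hΩ).comp (fun t ht => (hflow t ht).continuousAt.continuousWithinAt)
      fun t ht => hpos t ht).norm
  rw [← hα0] at hψint hDfull ⊢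
  exact integral_norm_gradient_le_of_hasDerivAt_neg_gradient hdiff hflow
    (fun t ht => hgrad_ne _ (hpos t (Ioo_subset_Icc_self ht)))
    (hspeed.integrableOn_Icc.mono_set Ioo_subset_Icc_self)
    (fun t ht => hpos t (Ioo_subset_Icc_self ht)) hψint (ae_of_all _ hψ0) hDfull
    fun t ht => hKL _ (hpos t (Ioo_subset_Icc_self ht))

theorem length_bound_along_gradient_flow (n : ℕ) (hn : 1 ≤ n)
    (f : EuclideanSpace ℝ (Fin n) → ℝ)
    (hf : Continuous f) (hf0 : ∀ x, 0 ≤ f x)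
    (hC1 : ContDiffOn ℝ 1 f {x | 0 < f x})
    (hgrad_ne : ∀ x, 0 < f x → gradient f x ≠ 0)
    (x₀ : EuclideanSpace ℝ (Fin n)) (hx₀ : 0 < f x₀)
    (ψ : ℝ → ℝ) (hψ0 : ∀ t, 0 ≤ ψ t) (hψint : IntegrableOn ψ (Ioo 0 (f x₀)))
    (D : Set ℝ) (hD : MeasurableSet D) (hDsub : D ⊆ Ioo 0 (f x₀))
    (hDfull : volume (Ioo 0 (f x₀) \ D) = 0)
    (hKL : ∀ x, 0 < f x → f x ∈ D → 1 ≤ ψ (f x) * ‖gradient f x‖)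
    (T : ℝ≥0∞) (hT : 0 < T)
    (α : ℝ → EuclideanSpace ℝ (Fin n)) (hα0 : α 0 = x₀)
    (hαΩ : ∀ t : ℝ, 0 ≤ t → ENNReal.ofReal t < T → 0 < f (α t))
    (hαflow : ∀ t : ℝ, 0 ≤ t → ENNReal.ofReal t < T →
      HasDerivAt α (-(gradient f (α t))) t) :
    ∀ s : ℝ, 0 < s → ENNReal.ofReal s < T →
      ∫ r in Ioo (0:ℝ) s, ‖gradient f (α r)‖ ≤ ∫ r in Ioo (0:ℝ) (f x₀), ψ r :=
  length_bound_along_gradient_flow_general n f hf hC1 hgrad_ne x₀ ψ hψ0 hψint D hDfull hKL T α hα0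
    hαΩ hαflow
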